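/- Consider a Gaussian evolutionary algorithm with λ_n ≤ M·λ_{n−1} and offspring x_{n,i} = x_n + σ_{n,i}·N_{n,i} (N_{n,i} i.i.d. standard Gaussian in ℝ^d). Assume local convergence: for every δ > 0 there exists K with P(∀n: ‖x_n‖ ≤ K and ∀i: σ_{n,i} ≤ K e^{−n/K}) ≥ 1 − δ. Then for every ε > 0 there exists K' = K'(ε) such that with probability at least 1 − ε, ‖x_{n,i}‖ ≤ K' for all n and all i ≤ λ_n. -/

import Mathlib

/-!
On the local-convergence event the step sizes at generation `n` are at most `K e^{-n/K}`, and
`(m + n (log M + 1)) e^{-n/K}` is bounded in `n`; so offspring can leave a fixed ball only if some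
Gaussian `N n i` has norm above `m + n (log M + 1)`. By Fernique's theorem `‖N n i‖` has an
exponential moment, so by Markov's inequality each of these events has probability
`O(e^{-m} (e M)^{-n})`. A union bound over the at most `λ₀ Mⁿ` offspring of every generation
gives `O(e^{-m})`, which is small for large `m`.
-/

open MeasureTheory ProbabilityTheory Filter
open scoped ENNReal Topology

/-- The standard Gaussian measure on `EuclideanSpace ℝ (Fin d)`. -/
noncomputable def stdGaussianE (d : ℕ) : Measure (EuclideanSpace ℝ (Fin d)) :=
  Measure.map (MeasurableEquiv.toLp 2 (Fin d → ℝ))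
    (Measure.pi fun _ : Fin d => gaussianReal 0 1)

lemma integrable_exp_norm_of_isGaussian {E : Type*} [NormedAddCommGroup E] [NormedSpace ℝ E]
    [MeasurableSpace E] [BorelSpace E] [CompleteSpace E] [SecondCountableTopology E]
    (μ : Measure E) [IsGaussian μ] : Integrable (fun y ↦ Real.exp ‖y‖) μ := by
  obtain ⟨C, hC, hint⟩ := IsGaussian.exists_integrable_exp_sq μ
  refine (hint.const_mul (Real.exp (1 / (4 * C)))).mono' (by fun_prop) (ae_of_all _ fun y ↦ ?_)
  have hlin : ‖y‖ ≤ 1 / (4 * C) + C * ‖y‖ ^ 2 := by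
    field_simp
    nlinarith [sq_nonneg (2 * C * ‖y‖ - 1)]
  rw [Real.norm_of_nonneg (Real.exp_pos _).le, ← Real.exp_add]
  exact Real.exp_le_exp.mpr hlin

lemma lintegral_exp_norm_stdGaussianE_ne_top (d : ℕ) :
    ∫⁻ y, ENNReal.ofReal (Real.exp ‖y‖) ∂stdGaussianE d ≠ ∞ := by
  rw [stdGaussianE, MeasurableEquiv.coe_toLp, map_pi_eq_stdGaussian]
  exact (integrable_exp_norm_of_isGaussian _).lintegral_lt_top.ne

lemma measure_lt_norm_le_lintegral_exp_mul {E : Type*} [NormedAddCommGroup E] [MeasurableSpace E]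
    [OpensMeasurableSpace E] (μ : Measure E) (t : ℝ) :
    μ {y | t < ‖y‖} ≤
      (∫⁻ y, ENNReal.ofReal (Real.exp ‖y‖) ∂μ) * ENNReal.ofReal (Real.exp (-t)) := by
  have hsub : {y : E | t < ‖y‖} ⊆
      {y | ENNReal.ofReal (Real.exp t) ≤ ENNReal.ofReal (Real.exp ‖y‖)} :=
    fun y hy ↦ ENNReal.ofReal_le_ofReal (Real.exp_le_exp.mpr hy.le)
  refine (measure_mono hsub).trans ?_
  rw [Real.exp_neg, ENNReal.ofReal_inv_of_pos (Real.exp_pos t), ← div_eq_mul_inv]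
  exact meas_ge_le_lintegral_div (by fun_prop) (by simp [Real.exp_pos]) ENNReal.ofReal_ne_top

lemma natCast_mul_exp_neg_le_of_le_mul {lam : ℕ → ℕ} {M : ℝ} (hM : 0 < M)
    (hlam : ∀ n, (lam (n + 1) : ℝ) ≤ M * lam n) (m : ℝ) (n : ℕ) :
    lam n * Real.exp (-(m + n * (Real.log M + 1))) ≤
      Real.exp (-m) * (lam 0 * Real.exp (-1) ^ n) := by
  have hgeom : (lam n : ℝ) ≤ M ^ n * lam 0 :=
    le_geom (u := fun n ↦ (lam n : ℝ)) hM.le n fun k _ ↦ hlam k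
  have hexp : Real.exp (-(m + n * (Real.log M + 1))) =
      Real.exp (-m) * Real.exp (-1) ^ n / M ^ n := by
    have h : Real.exp (n * (Real.log M + 1)) = M ^ n * Real.exp 1 ^ n := by
      rw [Real.exp_nat_mul, Real.exp_add, Real.exp_log hM, mul_pow]
    rw [neg_add, Real.exp_add, Real.exp_neg (n * _), h, Real.exp_neg 1, inv_pow]
    field_simp
  rw [hexp]
  calc (lam n : ℝ) * (Real.exp (-m) * Real.exp (-1) ^ n / M ^ n)
      ≤ M ^ n * lam 0 * (Real.exp (-m) * Real.exp (-1) ^ n / M ^ n) := by gcongr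
    _ = Real.exp (-m) * (lam 0 * Real.exp (-1) ^ n) := by field_simp

section UnionBound

variable {Ω E : Type*} [MeasurableSpace Ω] [NormedAddCommGroup E] [MeasurableSpace E]
  [OpensMeasurableSpace E] (P : Measure Ω) {N : ℕ → ℕ → Ω → E}
  (hN : ∀ n i, Measurable (N n i)) {ν : Measure E} (hlaw : ∀ n i, P.map (N n i) = ν)
include hN hlaw

lemma measure_exists_lt_norm_le_tsum (lam : ℕ → ℕ) (r : ℕ → ℝ) :
    P {ω | ∃ n, ∃ i < lam n, r n < ‖N n i ω‖} ≤
      ∑' n, (lam n : ℝ≥0∞) * ν {y | r n < ‖y‖} := by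
  have hset : {ω | ∃ n, ∃ i < lam n, r n < ‖N n i ω‖} =
      ⋃ n, ⋃ i ∈ Finset.range (lam n), N n i ⁻¹' {y | r n < ‖y‖} := by
    ext ω; simp
  rw [hset]
  refine (measure_iUnion_le _).trans (ENNReal.tsum_le_tsum fun n ↦ ?_)
  refine (measure_biUnion_finset_le _ _).trans_eq ?_
  simp_rw [← Measure.map_apply (hN n _) (measurableSet_lt measurable_const measurable_norm), hlaw]
  simp

variable {lam : ℕ → ℕ} {M : ℝ} (hM : 0 < M) (hlam : ∀ n, (lam (n + 1) : ℝ) ≤ M * lam n)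
include hM hlam

lemma measure_exists_lt_norm_le_mul_exp_neg (m : ℝ) :
    P {ω | ∃ n, ∃ i < lam n, m + n * (Real.log M + 1) < ‖N n i ω‖} ≤
      (∫⁻ y, ENNReal.ofReal (Real.exp ‖y‖) ∂ν) *
        ENNReal.ofReal (∑' n : ℕ, lam 0 * Real.exp (-1) ^ n) * ENNReal.ofReal (Real.exp (-m)) := by
  set I := ∫⁻ y, ENNReal.ofReal (Real.exp ‖y‖) ∂ν
  have hsummable : Summable fun n : ℕ ↦ (lam 0 : ℝ) * Real.exp (-1) ^ n :=
    (summable_geometric_of_lt_one (Real.exp_nonneg _)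
      (Real.exp_lt_one_iff.mpr (by norm_num))).mul_left _
  calc _ ≤ ∑' n, (lam n : ℝ≥0∞) * ν {y | m + n * (Real.log M + 1) < ‖y‖} :=
        measure_exists_lt_norm_le_tsum P hN hlaw lam _
    _ ≤ ∑' n : ℕ, I * ENNReal.ofReal (Real.exp (-m) * (lam 0 * Real.exp (-1) ^ n)) := by
        refine ENNReal.tsum_le_tsum fun n ↦ ?_
        grw [measure_lt_norm_le_lintegral_exp_mul]
        rw [mul_left_comm, ← ENNReal.ofReal_natCast, ← ENNReal.ofReal_mul (by positivity)]
        exact mul_le_mul_right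
          (ENNReal.ofReal_le_ofReal (natCast_mul_exp_neg_le_of_le_mul hM hlam m n)) I
    _ = _ := by
        simp_rw [ENNReal.ofReal_mul (Real.exp_nonneg _), ENNReal.tsum_mul_left,
          ← ENNReal.ofReal_tsum_of_nonneg (fun n ↦ by positivity) hsummable]
        ring

lemma exists_measure_exists_lt_norm_le (hν : ∫⁻ y, ENNReal.ofReal (Real.exp ‖y‖) ∂ν ≠ ∞)
    {η : ℝ≥0∞} (hη : 0 < η) :
    ∃ m ≥ (0 : ℝ), P {ω | ∃ n, ∃ i < lam n, m + n * (Real.log M + 1) < ‖N n i ω‖} ≤ η := by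
  set C := (∫⁻ y, ENNReal.ofReal (Real.exp ‖y‖) ∂ν) *
    ENNReal.ofReal (∑' n : ℕ, lam 0 * Real.exp (-1) ^ n)
  have hlim : Tendsto (fun m : ℝ ↦ C * ENNReal.ofReal (Real.exp (-m))) atTop (𝓝 0) := by
    simpa using ENNReal.Tendsto.const_mul
      (ENNReal.tendsto_ofReal Real.tendsto_exp_neg_atTop_nhds_zero)
      (Or.inr (ENNReal.mul_ne_top hν ENNReal.ofReal_ne_top))
  obtain ⟨m, hm, hsmall⟩ :=
    ((eventually_ge_atTop 0).and (hlim.eventually (gt_mem_nhds hη))).exists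
  exact ⟨m, hm, (measure_exists_lt_norm_le_mul_exp_neg P hN hlaw hM hlam m).trans hsmall.le⟩

end UnionBound

lemma norm_add_smul_le_of_le_exp_neg {E : Type*} [NormedAddCommGroup E] [NormedSpace ℝ E]
    {x v : E} {σ K m L t : ℝ} (hK : 0 < K) (hm : 0 ≤ m) (hL : 0 ≤ L) (ht : 0 ≤ t)
    (hx : ‖x‖ ≤ K) (hσ₀ : 0 ≤ σ) (hσ : σ ≤ K * Real.exp (-t / K)) (hv : ‖v‖ ≤ m + t * L) :
    ‖x + σ • v‖ ≤ K + K * (m + K * L) := by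
  have hdecay : Real.exp (-t / K) ≤ 1 :=
    Real.exp_le_one_iff.mpr (by rw [neg_div, neg_nonpos]; positivity)
  have hpoly : t * Real.exp (-t / K) ≤ K := by
    have h := Real.add_one_le_exp (t / K)
    rw [neg_div, Real.exp_neg, ← div_eq_mul_inv, div_le_iff₀ (Real.exp_pos _)]
    calc t = K * (t / K) := by field_simp
      _ ≤ K * Real.exp (t / K) := by gcongr; linarith
  calc ‖x + σ • v‖ ≤ ‖x‖ + σ * ‖v‖ := by
        grw [norm_add_le, norm_smul, Real.norm_of_nonneg hσ₀]
    _ ≤ K + K * Real.exp (-t / K) * (m + t * L) := by gcongr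
    _ = K + K * (m * Real.exp (-t / K) + (t * Real.exp (-t / K)) * L) := by ring
    _ ≤ K + K * (m + K * L) := by gcongr; nlinarith

lemma one_sub_add_le_measure_of_subset_union {Ω : Type*} [MeasurableSpace Ω] {μ : Measure Ω}
    {H T B : Set Ω} {a b : ℝ≥0∞} (hsub : H ⊆ T ∪ B) (hH : 1 - a ≤ μ H) (hB : μ B ≤ b) :
    1 - (a + b) ≤ μ T := by
  rw [tsub_le_iff_right] at hH ⊢
  calc 1 ≤ μ H + a := hH
    _ ≤ μ T + μ B + a := by grw [measure_mono hsub, measure_union_le]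
    _ ≤ μ T + (a + b) := by grw [hB]; rw [add_assoc, add_comm b]

theorem exponential_population_cannot_escape_local_minima_general
    {Ω : Type*} [MeasureSpace Ω]
    {d : ℕ} (x : ℕ → Ω → EuclideanSpace ℝ (Fin d))
    (σ : ℕ → ℕ → Ω → ℝ) (N : ℕ → ℕ → Ω → EuclideanSpace ℝ (Fin d))
    (lam : ℕ → ℕ) (M : ℝ) (hM : 1 < M)
    (hlamgrow : ∀ n, (lam (n + 1) : ℝ) ≤ M * (lam n : ℝ))
    (hσpos : ∀ n i ω, 0 < σ n i ω)
    (hNmeas : ∀ n i, Measurable (N n i))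
    (hNlaw : ∀ n i, Measure.map (N n i) ℙ = stdGaussianE d)
    (hLC : ∀ δ : ℝ, 0 < δ → ∃ K : ℝ, 0 < K ∧
      (1 : ENNReal) - ENNReal.ofReal δ ≤
        ℙ {ω | ∀ n, ‖x n ω‖ ≤ K ∧ ∀ i < lam n, σ n i ω ≤ K * Real.exp (-(n : ℝ) / K)}) :
    ∀ ε : ℝ, 0 < ε → ∃ K' : ℝ, 0 < K' ∧
      (1 : ENNReal) - ENNReal.ofReal ε ≤
        ℙ {ω | ∀ n, ∀ i < lam n, ‖x n ω + σ n i ω • N n i ω‖ ≤ K'} := by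
  intro ε hε
  obtain ⟨K, hK, hgood⟩ := hLC (ε / 2) (half_pos hε)
  obtain ⟨m, hm, hbad⟩ := exists_measure_exists_lt_norm_le ℙ hNmeas hNlaw (by linarith) hlamgrow
    (lintegral_exp_norm_stdGaussianE_ne_top d) (ENNReal.ofReal_pos.mpr (half_pos hε))
  have hL : 0 < Real.log M + 1 := by linarith [Real.log_pos hM]
  refine ⟨K + K * (m + K * (Real.log M + 1)), by positivity, ?_⟩
  rw [← add_halves ε, ENNReal.ofReal_add (half_pos hε).le (half_pos hε).le]
  refine one_sub_add_le_measure_of_subset_union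
    (fun ω hω ↦ or_iff_not_imp_right.mpr fun hnear n i hi ↦ ?_) hgood hbad
  simp only [Set.mem_ofPred, not_exists, not_and, not_lt] at hnear
  exact norm_add_smul_le_of_le_exp_neg hK hm hL.le n.cast_nonneg (hω n).1 (hσpos n i ω).le
    ((hω n).2 i hi) (hnear n i hi)

/-- Theorem 1 of the paper: a Gaussian evolutionary algorithm with
`λ_n ≤ M·λ_{n−1}`, offspring `x_{n,i} = x_n + σ_{n,i}·N_{n,i}`, satisfying local
convergence (property `H1(K)` with probability `≥ 1 − δ` for suitable `K`), keeps all its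
offspring in a bounded ball: for every `ε > 0` there is `K'` such that with probability at
least `1 − ε`, `‖x_{n,i}‖ ≤ K'` for all `n` and `i ≤ λ_n`. -/
theorem exponential_population_cannot_escape_local_minima
    {Ω : Type*} [MeasureSpace Ω] [IsProbabilityMeasure (ℙ : Measure Ω)]
    {d : ℕ} (x : ℕ → Ω → EuclideanSpace ℝ (Fin d))
    (σ : ℕ → ℕ → Ω → ℝ) (N : ℕ → ℕ → Ω → EuclideanSpace ℝ (Fin d))
    (lam : ℕ → ℕ) (M : ℝ) (hM : 1 < M) (hlam0 : 0 < lam 0)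
    (hlamgrow : ∀ n, (lam (n + 1) : ℝ) ≤ M * (lam n : ℝ))
    (hσpos : ∀ n i ω, 0 < σ n i ω)
    (hNmeas : ∀ n i, Measurable (N n i))
    (hNlaw : ∀ n i, Measure.map (N n i) ℙ = stdGaussianE d)
    (hNiid : iIndepFun (fun p : ℕ × ℕ => N p.1 p.2) ℙ)
    (hLC : ∀ δ : ℝ, 0 < δ → ∃ K : ℝ, 0 < K ∧
      (1 : ENNReal) - ENNReal.ofReal δ ≤
        ℙ {ω | ∀ n, ‖x n ω‖ ≤ K ∧ ∀ i < lam n, σ n i ω ≤ K * Real.exp (-(n : ℝ) / K)}) :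
    ∀ ε : ℝ, 0 < ε → ∃ K' : ℝ, 0 < K' ∧
      (1 : ENNReal) - ENNReal.ofReal ε ≤
        ℙ {ω | ∀ n, ∀ i < lam n, ‖x n ω + σ n i ω • N n i ω‖ ≤ K'} :=
  exponential_population_cannot_escape_local_minima_general x σ N lam M hM hlamgrow hσpos hNmeas
    hNlaw hLC
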